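/- Let h be a positive self-adjoint operator on a separable Hilbert space with eigenvalues λ_n > 0 and orthonormal eigenbasis (u_n), such that tr h^{t-1} < ∞ for all t < t₀. Then the finite-dimensional Gaussian measures μ_{0,K} on span(u₀,…,u_K) with covariance diag(λ_j^{-1}) form a tight family in the Sobolev-type space ℌ^t for each t < t₀, since μ_{0,K}({u : ‖u‖_{ℌ^t} ≥ R}) ≤ R^{-2} tr[h^{t-1}] for all K. -/

import Mathlib

open MeasureTheory ProbabilityTheory

/-- The cylindrical Gaussian measure `μ_{0,K}` on `V_K = span(u₀,…,u_K)`, identified with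
`Fin (K+1) → ℝ × ℝ` via real and imaginary parts of the coordinates `⟨u, u_j⟩`; each
coordinate is a centered complex Gaussian of variance `λ_j⁻¹` (so each real component has
variance `1/(2 λ_j)`), corresponding to the density `∏ (λ_j/π) exp(-λ_j |⟨u,u_j⟩|²)`. -/
noncomputable def cylGaussian (lam : ℕ → ℝ) (K : ℕ) : Measure (Fin (K + 1) → ℝ × ℝ) :=
  Measure.pi fun j =>
    (gaussianReal 0 (Real.toNNReal (1 / (2 * lam j)))).prod
      (gaussianReal 0 (Real.toNNReal (1 / (2 * lam j))))

/-! Markov's inequality for `‖u‖²_{ℌ^t}`: under `μ_{0,K}` each coordinate has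
`E |⟨u, u_j⟩|² = λ_j⁻¹`, so `E ‖u‖²_{ℌ^t} = ∑_{j ≤ K} λ_j^{t-1} ≤ tr h^{t-1}` for every `K`. -/

open scoped NNReal ENNReal

lemma lintegral_sq_gaussianReal (v : ℝ≥0) :
    ∫⁻ x, ENNReal.ofReal (x ^ 2) ∂gaussianReal 0 v = v := by
  have hint : Integrable (fun x : ℝ => x ^ 2) (gaussianReal 0 v) :=
    (memLp_id_gaussianReal 2).integrable_sq
  have hvar : Var[id; gaussianReal 0 v] = ∫ x, x ^ 2 ∂gaussianReal 0 v :=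
    variance_of_integral_eq_zero aemeasurable_id integral_id_gaussianReal
  rw [← ofReal_integral_eq_lintegral_ofReal hint (ae_of_all _ fun x => sq_nonneg x), ← hvar,
    variance_id_gaussianReal, ENNReal.ofReal_coe_nnreal]

lemma lintegral_sq_add_sq_prod (μ ν : Measure ℝ) [IsProbabilityMeasure μ]
    [IsProbabilityMeasure ν] :
    ∫⁻ p, ENNReal.ofReal (p.1 ^ 2 + p.2 ^ 2) ∂μ.prod ν
      = ∫⁻ x, ENNReal.ofReal (x ^ 2) ∂μ + ∫⁻ y, ENNReal.ofReal (y ^ 2) ∂ν := by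
  have hsq : Measurable fun x : ℝ => ENNReal.ofReal (x ^ 2) := by fun_prop
  simp_rw [ENNReal.ofReal_add (sq_nonneg _) (sq_nonneg _)]
  rw [lintegral_add_left (f := fun p : ℝ × ℝ => ENNReal.ofReal (p.1 ^ 2)) (by fun_prop),
    measurePreserving_fst.lintegral_comp hsq, measurePreserving_snd.lintegral_comp hsq]

lemma lintegral_sum_comp_eval_pi {ι : Type*} [Fintype ι] {α : ι → Type*}
    [∀ i, MeasurableSpace (α i)] (μ : ∀ i, Measure (α i)) [∀ i, IsProbabilityMeasure (μ i)]
    {f : ∀ i, α i → ℝ≥0∞} (hf : ∀ i, Measurable (f i)) :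
    ∫⁻ a, ∑ i, f i (a i) ∂Measure.pi μ = ∑ i, ∫⁻ x, f i x ∂μ i := by
  refine (lintegral_finsetSum _ fun i _ => (hf i).comp (measurable_pi_apply i)).trans ?_
  exact Finset.sum_congr rfl fun i _ => (measurePreserving_eval μ i).lintegral_comp (hf i)

/-- `‖u‖²_{ℌ^t}` in the coordinates of `cylGaussian`. -/
noncomputable def hNormSq (lam : ℕ → ℝ) (t : ℝ) {K : ℕ} (a : Fin (K + 1) → ℝ × ℝ) : ℝ :=
  ∑ j : Fin (K + 1), lam j ^ t * ((a j).1 ^ 2 + (a j).2 ^ 2)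

lemma lintegral_rpow_mul_sq_add_sq_gaussianReal_prod {l : ℝ} (hl : 0 < l) (t : ℝ) :
    ∫⁻ p, ENNReal.ofReal (l ^ t * (p.1 ^ 2 + p.2 ^ 2))
        ∂(gaussianReal 0 (Real.toNNReal (1 / (2 * l)))).prod
          (gaussianReal 0 (Real.toNNReal (1 / (2 * l))))
      = ENNReal.ofReal (l ^ (t - 1)) := by
  have hv : (0 : ℝ) ≤ 1 / (2 * l) := by positivity
  simp_rw [ENNReal.ofReal_mul (Real.rpow_nonneg hl.le t)]
  rw [lintegral_const_mul _ (by fun_prop), lintegral_sq_add_sq_prod,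
    lintegral_sq_gaussianReal, ← ENNReal.ofReal_coe_nnreal, Real.coe_toNNReal _ hv,
    ← ENNReal.ofReal_add hv hv, ← ENNReal.ofReal_mul (Real.rpow_nonneg hl.le t),
    Real.rpow_sub_one hl.ne']
  congr 1
  field_simp
  ring

lemma lintegral_hNormSq_cylGaussian {lam : ℕ → ℝ} (hlam : ∀ n, 0 < lam n) (t : ℝ) (K : ℕ) :
    ∫⁻ a, ENNReal.ofReal (hNormSq lam t a) ∂cylGaussian lam K
      = ENNReal.ofReal (∑ j ∈ Finset.range (K + 1), lam j ^ (t - 1)) := by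
  have hterm : ∀ (j : Fin (K + 1)) (p : ℝ × ℝ), 0 ≤ lam j ^ t * (p.1 ^ 2 + p.2 ^ 2) :=
    fun j p => by have := hlam j; positivity
  calc ∫⁻ a, ENNReal.ofReal (hNormSq lam t a) ∂cylGaussian lam K
      = ∑ j : Fin (K + 1), ∫⁻ p, ENNReal.ofReal (lam j ^ t * (p.1 ^ 2 + p.2 ^ 2))
          ∂(gaussianReal 0 (Real.toNNReal (1 / (2 * lam j)))).prod
            (gaussianReal 0 (Real.toNNReal (1 / (2 * lam j)))) := by
        simp_rw [hNormSq, ENNReal.ofReal_sum_of_nonneg fun j _ => hterm j _]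
        exact lintegral_sum_comp_eval_pi _ (fun _ => by fun_prop)
          (f := fun (j : Fin (K + 1)) (p : ℝ × ℝ) =>
            ENNReal.ofReal (lam j ^ t * (p.1 ^ 2 + p.2 ^ 2)))
    _ = ∑ j : Fin (K + 1), ENNReal.ofReal (lam j ^ (t - 1)) :=
        Finset.sum_congr rfl fun j _ =>
          lintegral_rpow_mul_sq_add_sq_gaussianReal_prod (hlam j) t
    _ = ENNReal.ofReal (∑ j ∈ Finset.range (K + 1), lam j ^ (t - 1)) := by
        rw [← Fin.sum_univ_eq_sum_range]
        exact (ENNReal.ofReal_sum_of_nonneg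
          fun (j : Fin (K + 1)) _ => Real.rpow_nonneg (hlam j).le _).symm

/-- If `tr h^{t-1} = ∑ λₙ^{t-1} < ∞`, then the Gaussian measures `μ_{0,K}`
satisfy the Chebyshev-type bound
`μ_{0,K}({u : ‖u‖_{ℌ^t} ≥ R}) ≤ R⁻² tr[h^{t-1}]` uniformly in `K`,
where `‖u‖²_{ℌ^t} = ∑_j λ_j^t |⟨u,u_j⟩|²`; hence the family is tight in `ℌ^t`. -/
theorem cylGaussian_tight
    (lam : ℕ → ℝ) (hlam : ∀ n, 0 < lam n) (t : ℝ)
    (htr : Summable fun n => lam n ^ (t - 1))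
    (R : ℝ) (hR : 0 < R) (K : ℕ) :
    cylGaussian lam K
        {a : Fin (K + 1) → ℝ × ℝ |
          R ^ 2 ≤ ∑ j : Fin (K + 1), lam j ^ t * (((a j).1) ^ 2 + ((a j).2) ^ 2)}
      ≤ ENNReal.ofReal (R⁻¹ ^ 2 * ∑' n, lam n ^ (t - 1)) := by
  have hR2 : ENNReal.ofReal (R ^ 2) ≠ 0 := (ENNReal.ofReal_pos.mpr (by positivity)).ne'
  calc cylGaussian lam K {a | R ^ 2 ≤ hNormSq lam t a}
      ≤ cylGaussian lam K {a | ENNReal.ofReal (R ^ 2) ≤ ENNReal.ofReal (hNormSq lam t a)} :=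
        measure_mono fun a ha => ENNReal.ofReal_le_ofReal ha
    _ ≤ (∫⁻ a, ENNReal.ofReal (hNormSq lam t a) ∂cylGaussian lam K)
          / ENNReal.ofReal (R ^ 2) :=
        meas_ge_le_lintegral_div (by unfold hNormSq; fun_prop) hR2 ENNReal.ofReal_ne_top
    _ ≤ ENNReal.ofReal (∑' n, lam n ^ (t - 1)) / ENNReal.ofReal (R ^ 2) := by
        rw [lintegral_hNormSq_cylGaussian hlam]
        gcongr
        exact htr.sum_le_tsum _ fun n _ => Real.rpow_nonneg (hlam n).le _
    _ = ENNReal.ofReal (R⁻¹ ^ 2 * ∑' n, lam n ^ (t - 1)) := by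
        rw [← ENNReal.ofReal_div_of_pos (by positivity), inv_pow, div_eq_inv_mul]
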